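/- After an incremental update on the set E_i(v) of edges incoming to v, for any source s and any edge (a,b): (a,b) ∈ DAG'_R(s) if and only if at least one of the following holds: (i) (a,b) ∈ DAG_R(s) and flag(b,s) ∈ {UN-changed, NUM-changed}; (ii) (a,b) ∈ R_b and flag(b,s) ∈ {NUM-changed, WT-changed}. -/

import Mathlib

/-!
Weights only decrease, and only on edges into `v`, so a path that became strictly lighter passes
through `v` and weighs at least `d'(x,v) + d'(v,y)`. Moreover, flag(b,s) is NUM- or WT-changed
exactly when some shortest `b ⇝ s` path of `G'` became strictly lighter, and when
`d'(b,s) = d(b,s)` every old shortest path is still shortest.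

If `b → a` starts a shortest `b ⇝ s` path of `G'` and (i) fails, then `d'(b,s) < w(b,a) + d(a,s)`,
so `b → a` followed by a shortest `a ⇝ s` path of `G'` is such a lighter path. Either its first
edge was updated, so `a = v`, or `d'(a,s) < d(a,s)` and `a ⇝ s` passes through `v`; in both cases
`b → a` starts a shortest path to `v`. Conversely, under (ii) the changed flag gives
`d'(b,s) = d'(b,v) + d'(v,s)`, and through `v` the edge `b → a` extends to a shortest path to `s`.
-/

open scoped ENNReal

namespace BC

variable {V : Type*}

/-- `p` is a path from `s` to `t` in the weighted digraph with weight function `w`;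
an edge is present iff its weight is not `⊤`. -/
def IsPath (w : V → V → ℝ≥0∞) (s t : V) (p : List V) : Prop :=
  p ≠ [] ∧ p.head? = some s ∧ p.getLast? = some t ∧ p.Chain' (fun a b => w a b ≠ ⊤)

/-- The weight of a path: the sum of the weights of its consecutive edges. -/
noncomputable def pWeight (w : V → V → ℝ≥0∞) (p : List V) : ℝ≥0∞ :=
  ((p.zip p.tail).map fun e => w e.1 e.2).sum

/-- The shortest-path distance `d(s,t)` (equal to `⊤` if no path exists). -/
noncomputable def dist (w : V → V → ℝ≥0∞) (s t : V) : ℝ≥0∞ :=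
  ⨅ p ∈ {p | IsPath w s t p}, pWeight w p

/-- `p` is a shortest path from `s` to `t`. -/
def IsShortest (w : V → V → ℝ≥0∞) (s t : V) (p : List V) : Prop :=
  IsPath w s t p ∧ pWeight w p = dist w s t

/-- `σ_{st}`: the number of shortest paths from `s` to `t`. -/
noncomputable def nsp (w : V → V → ℝ≥0∞) (s t : V) : ℕ :=
  Set.ncard {p | IsShortest w s t p}

/-- `σ_{st}(x)`: the number of shortest paths from `s` to `t` passing through `x`. -/
noncomputable def nspVia (w : V → V → ℝ≥0∞) (s t x : V) : ℕ :=
  Set.ncard {p | IsShortest w s t p ∧ x ∈ p}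

/-- The directed edge `(a,b)` lies on the path `p`. -/
def edgeOn (p : List V) (a b : V) : Prop := (a, b) ∈ p.zip p.tail

/-- The shortest-path DAG rooted at `s`: the edges lying on shortest paths from `s`. -/
def dagSet (w : V → V → ℝ≥0∞) (s : V) : Set (V × V) :=
  {e | w e.1 e.2 ≠ ⊤ ∧ dist w s e.1 ≠ ⊤ ∧ dist w s e.1 + w e.1 e.2 = dist w s e.2}

/-- flag(s,t) = WT-changed : the distance from `s` to `t` decreased. -/
def WTchanged (w w' : V → V → ℝ≥0∞) (s t : V) : Prop := dist w' s t < dist w s t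

/-- flag(s,t) = NUM-changed : same distance, strictly more shortest paths. -/
def NUMchanged (w w' : V → V → ℝ≥0∞) (s t : V) : Prop :=
  dist w' s t = dist w s t ∧ nsp w s t < nsp w' s t

/-- flag(s,t) = UN-changed : same distance, same number of shortest paths. -/
def UNchanged (w w' : V → V → ℝ≥0∞) (s t : V) : Prop :=
  dist w' s t = dist w s t ∧ nsp w' s t = nsp w s t

section Paths

variable {w : V → V → ℝ≥0∞} {s t : V}

@[simp]
lemma pWeight_singleton (w : V → V → ℝ≥0∞) (x : V) : pWeight w [x] = 0 := rfl

@[simp]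
lemma pWeight_cons_cons (w : V → V → ℝ≥0∞) (x y : V) (l : List V) :
    pWeight w (x :: y :: l) = w x y + pWeight w (y :: l) := by
  simp [pWeight]

lemma pWeight_append_pair (w : V → V → ℝ≥0∞) (x y : V) :
    ∀ l : List V, pWeight w (l ++ [x, y]) = pWeight w (l ++ [x]) + w x y
  | [] => by simp
  | [a] => by simp [add_comm]
  | a :: b :: l => by
    have ih := pWeight_append_pair w x y (b :: l)
    simp only [List.cons_append, pWeight_cons_cons] at ih ⊢
    rw [ih, add_assoc]

lemma pWeight_reverse (w : V → V → ℝ≥0∞) :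
    ∀ p : List V, pWeight w p.reverse = pWeight (fun a b => w b a) p
  | [] | [_] => rfl
  | x :: y :: l => by
    rw [List.reverse_cons, List.reverse_cons, List.append_assoc, List.singleton_append,
      pWeight_append_pair, ← List.reverse_cons, pWeight_reverse w (y :: l), pWeight_cons_cons,
      add_comm]

lemma isPath_iff {p : List V} :
    IsPath w s t p ↔
      p ≠ [] ∧ p.head? = some s ∧ p.getLast? = some t ∧ p.IsChain (fun a b => w a b ≠ ⊤) :=
  Iff.rfl

lemma isPath_singleton {x : V} : IsPath w s t [x] ↔ s = x ∧ t = x := by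
  simp [isPath_iff, eq_comm]

lemma isPath_cons_cons {x y : V} {l : List V} :
    IsPath w s t (x :: y :: l) ↔ s = x ∧ w x y ≠ ⊤ ∧ IsPath w y t (y :: l) := by
  simp only [isPath_iff, List.getLast?_cons_cons, List.isChain_cons_cons]
  simp [eq_comm]
  tauto

lemma IsPath.exists_eq_cons {p : List V} (hp : IsPath w s t p) : ∃ q, p = s :: q :=
  List.head?_eq_some_iff.mp hp.2.1

lemma isPath_reverse {p : List V} :
    IsPath w t s p.reverse ↔ IsPath (fun a b => w b a) s t p := by
  simp only [isPath_iff, List.head?_reverse, List.getLast?_reverse, List.isChain_reverse, ne_eq,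
    List.reverse_eq_nil_iff]
  tauto

lemma dist_le_pWeight {p : List V} (hp : IsPath w s t p) : dist w s t ≤ pWeight w p :=
  iInf₂_le p hp

lemma dist_flip (w : V → V → ℝ≥0∞) (s t : V) : dist (fun a b => w b a) s t = dist w t s := by
  simp only [dist, Set.mem_ofPred_eq, ← isPath_reverse, ← pWeight_reverse]
  exact List.reverse_involutive.surjective.iInf_comp fun p => ⨅ _ : IsPath w t s p, pWeight w p

lemma dist_self (w : V → V → ℝ≥0∞) (s : V) : dist w s s = 0 :=
  nonpos_iff_eq_zero.1 (dist_le_pWeight (isPath_singleton.2 ⟨rfl, rfl⟩))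

lemma dist_le_add_dist (x y z : V) : dist w x z ≤ w x y + dist w y z := by
  rcases eq_or_ne (w x y) ⊤ with h | h
  · simp [h]
  simp only [dist, ENNReal.add_iInf]
  refine le_iInf₂ fun p hp => ?_
  obtain ⟨q, rfl⟩ := IsPath.exists_eq_cons hp
  exact (dist_le_pWeight (isPath_cons_cons.2 ⟨rfl, h, hp⟩)).trans_eq (pWeight_cons_cons ..)

lemma dist_le_weight (x y : V) : dist w x y ≤ w x y := by
  simpa [dist_self] using dist_le_add_dist (w := w) x y y

lemma dist_le_pWeight_add {x y : V} {p : List V} (hp : IsPath w x y p) (z : V) :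
    dist w x z ≤ pWeight w p + dist w y z := by
  obtain ⟨q, rfl⟩ := hp.exists_eq_cons
  induction q generalizing x with
  | nil => obtain ⟨-, rfl⟩ := isPath_singleton.1 hp; simp
  | cons c r ih =>
    obtain ⟨-, -, hcr⟩ := isPath_cons_cons.1 hp
    calc dist w x z ≤ w x c + dist w c z := dist_le_add_dist x c z
      _ ≤ w x c + (pWeight w (c :: r) + dist w y z) := by gcongr; exact ih hcr
      _ = pWeight w (x :: c :: r) + dist w y z := by rw [pWeight_cons_cons, add_assoc]

lemma dist_triangle (x y z : V) : dist w x z ≤ dist w x y + dist w y z := by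
  simp only [dist, ENNReal.iInf_add]
  exact le_iInf₂ fun p hp => dist_le_pWeight_add hp z

lemma pWeight_ne_top {p : List V} (hp : IsPath w s t p) : pWeight w p ≠ ⊤ := by
  obtain ⟨q, rfl⟩ := hp.exists_eq_cons
  induction q generalizing s with
  | nil => simp
  | cons c r ih =>
    obtain ⟨-, hsc, hcr⟩ := isPath_cons_cons.1 hp
    exact (pWeight_cons_cons w s c r) ▸ ENNReal.add_ne_top.2 ⟨hsc, ih hcr⟩

lemma isPath_of_pWeight_ne_top {w₀ : V → V → ℝ≥0∞} {p : List V} (hp : IsPath w₀ s t p)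
    (h : pWeight w p ≠ ⊤) : IsPath w s t p := by
  obtain ⟨q, rfl⟩ := hp.exists_eq_cons
  induction q generalizing s with
  | nil => exact isPath_singleton.2 (isPath_singleton.1 hp)
  | cons c r ih =>
    obtain ⟨-, -, hcr⟩ := isPath_cons_cons.1 hp
    rw [pWeight_cons_cons, ENNReal.add_ne_top] at h
    exact isPath_cons_cons.2 ⟨rfl, h.1, ih hcr h.2⟩

lemma dist_le_pWeight_of_isPath {w₀ : V → V → ℝ≥0∞} {p : List V} (hp : IsPath w₀ s t p) :
    dist w s t ≤ pWeight w p := by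
  rcases eq_or_ne (pWeight w p) ⊤ with h | h
  · exact h ▸ le_top
  · exact dist_le_pWeight (isPath_of_pWeight_ne_top hp h)

lemma weight_eq_dist_of_add_dist_eq {x y z : V} (h : w x y + dist w y z = dist w x z)
    (hz : dist w y z ≠ ⊤) : w x y = dist w x y :=
  le_antisymm ((ENNReal.add_le_add_iff_right hz).1 (h.trans_le (dist_triangle x y z)))
    (dist_le_weight x y)

lemma weight_add_dist_eq_of_add_dist_eq {a b u : V} (h : w b a + dist w a u = dist w b u)
    (hu : dist w b u + dist w u t ≤ dist w b t) : w b a + dist w a t = dist w b t := by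
  refine le_antisymm ?_ (dist_le_add_dist b a t)
  calc w b a + dist w a t ≤ w b a + (dist w a u + dist w u t) :=
        by gcongr; exact dist_triangle a u t
    _ = dist w b u + dist w u t := by rw [← h, add_assoc]
    _ ≤ dist w b t := hu

lemma natCast_mul_le_pWeight {ε : ℝ≥0∞} (hε : ∀ a b, ε ≤ w a b) :
    ∀ p : List V, ((p.length - 1 : ℕ) : ℝ≥0∞) * ε ≤ pWeight w p
  | [] | [_] => by simp
  | x :: y :: l => by
    have ih := natCast_mul_le_pWeight hε (y :: l)
    simp only [List.length_cons, Nat.add_sub_cancel, Nat.cast_add, Nat.cast_one, add_mul,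
      one_mul, pWeight_cons_cons] at ih ⊢
    rw [add_comm]
    gcongr
    exact hε x y

lemma mem_dagSet_flip_iff {a b : V} :
    (a, b) ∈ dagSet (fun x y => w y x) s ↔ w b a + dist w a s = dist w b s ∧ dist w b s ≠ ⊤ := by
  simp only [dagSet, Set.mem_ofPred_eq, dist_flip]
  constructor
  · rintro ⟨hba, has, h⟩
    exact ⟨by rw [← h, add_comm], h ▸ ENNReal.add_ne_top.2 ⟨has, hba⟩⟩
  · rintro ⟨h, hs⟩
    obtain ⟨hba, has⟩ := ENNReal.add_ne_top.1 (h ▸ hs)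
    exact ⟨hba, has, by rw [add_comm, h]⟩

lemma mem_dagSet_self_iff {a b : V} : (b, a) ∈ dagSet w b ↔ w b a ≠ ⊤ ∧ w b a = dist w b a := by
  simp [dagSet, dist_self]

end Paths

section Positive

variable [Finite V] {w : V → V → ℝ≥0∞}

lemma finite_setOf_isPath_pWeight_le (hpos : ∀ a b, 0 < w a b) (s t : V) {C : ℝ≥0∞}
    (hC : C ≠ ⊤) : {p | IsPath w s t p ∧ pWeight w p ≤ C}.Finite := by
  have : Nonempty V := ⟨s⟩
  obtain ⟨e, he⟩ := Finite.exists_min fun e : V × V => w e.1 e.2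
  have hε : w e.1 e.2 ≠ 0 := (hpos e.1 e.2).ne'
  obtain ⟨N, hN⟩ := ENNReal.exists_nat_gt (ENNReal.div_lt_top hC hε).ne
  refine (List.finite_length_le V N).subset fun p ⟨_, hp⟩ => ?_
  have hlen : ((p.length - 1 : ℕ) : ℝ≥0∞) < N :=
    ((ENNReal.le_div_iff_mul_le (Or.inl hε) (Or.inr hC)).2
      ((natCast_mul_le_pWeight (fun a b => he (a, b)) p).trans hp)).trans_lt hN
  have : p.length - 1 < N := by exact_mod_cast hlen
  show p.length ≤ N
  omega

lemma exists_isShortest (hpos : ∀ a b, 0 < w a b) {s t : V} (h : dist w s t ≠ ⊤) :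
    ∃ p, IsShortest w s t p := by
  obtain ⟨p₀, hp₀⟩ : ∃ p, IsPath w s t p := by
    by_contra! H
    exact h (by simp [dist, H])
  obtain ⟨m, ⟨hm, -⟩, hmin⟩ := Set.exists_min_image _ (pWeight w)
    (finite_setOf_isPath_pWeight_le hpos s t (pWeight_ne_top hp₀)) ⟨p₀, hp₀, le_rfl⟩
  refine ⟨m, hm, le_antisymm (le_iInf₂ fun q hq => ?_) (dist_le_pWeight hm)⟩
  rcases le_total (pWeight w q) (pWeight w p₀) with hqp | hpq
  · exact hmin q ⟨hq, hqp⟩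
  · exact (hmin p₀ ⟨hp₀, le_rfl⟩).trans hpq

lemma finite_setOf_isShortest (hpos : ∀ a b, 0 < w a b) (s t : V) :
    {p | IsShortest w s t p}.Finite := by
  rcases eq_or_ne (dist w s t) ⊤ with h | h
  · exact Set.finite_empty.subset fun p hp => pWeight_ne_top hp.1 (hp.2.trans h)
  · exact (finite_setOf_isPath_pWeight_le hpos s t h).subset fun p hp => ⟨hp.1, hp.2.le⟩

end Positive

section Update

variable {w w' : V → V → ℝ≥0∞} {s t v : V}

lemma pWeight_mono (hle : ∀ a b, w' a b ≤ w a b) (p : List V) : pWeight w' p ≤ pWeight w p :=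
  List.sum_le_sum fun e _ => hle e.1 e.2

lemma dist_mono (hle : ∀ a b, w' a b ≤ w a b) (s t : V) : dist w' s t ≤ dist w s t :=
  le_iInf₂ fun p hp => (dist_le_pWeight_of_isPath hp).trans (pWeight_mono hle p)

lemma IsShortest.of_dist_eq (hle : ∀ a b, w' a b ≤ w a b) (hd : dist w' s t = dist w s t)
    {p : List V} (hp : IsShortest w s t p) : IsShortest w' s t p :=
  have hp' : IsPath w' s t p := isPath_of_pWeight_ne_top hp.1
    ((pWeight_mono hle p).trans_lt (pWeight_ne_top hp.1).lt_top).ne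
  ⟨hp', le_antisymm ((pWeight_mono hle p).trans_eq (hp.2.trans hd.symm)) (dist_le_pWeight hp')⟩

lemma weight_add_dist_eq_of_dist_eq (hle : ∀ a b, w' a b ≤ w a b) {a b : V}
    (h : w b a + dist w a s = dist w b s) (hd : dist w' b s = dist w b s) :
    w' b a + dist w' a s = dist w' b s := by
  refine le_antisymm ?_ (dist_le_add_dist b a s)
  calc w' b a + dist w' a s ≤ w b a + dist w a s := add_le_add (hle b a) (dist_mono hle a s)
    _ = dist w' b s := h.trans hd.symm

lemma weight_add_dist_eq_and_dist_eq_or_lt (hle : ∀ a b, w' a b ≤ w a b) (a b : V) :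
    (w b a + dist w a s = dist w b s ∧ dist w' b s = dist w b s) ∨
      dist w' b s < w b a + dist w a s := by
  rcases (dist_mono hle b s).lt_or_eq with hd | hd
  · exact Or.inr (hd.trans_le (dist_le_add_dist b a s))
  rcases (dist_le_add_dist b a s).lt_or_eq with h | h
  · exact Or.inr (hd ▸ h)
  · exact Or.inl ⟨h.symm, hd⟩

lemma dist_add_dist_le_pWeight (hinto : ∀ a b, w' a b < w a b → b = v) {p : List V}
    (hp : IsPath w' s t p) (hlt : pWeight w' p < pWeight w p) :
    dist w' s v + dist w' v t ≤ pWeight w' p := by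
  obtain ⟨q, rfl⟩ := hp.exists_eq_cons
  induction q generalizing s with
  | nil => simp at hlt
  | cons c r ih =>
    obtain ⟨-, -, hcr⟩ := isPath_cons_cons.1 hp
    rw [pWeight_cons_cons] at hlt ⊢
    rcases lt_or_lt_of_add_lt_add hlt with hsc | hlt'
    · obtain rfl := hinto s c hsc
      exact add_le_add (dist_le_weight _ _) (dist_le_pWeight hcr)
    · calc dist w' s v + dist w' v t ≤ w' s c + dist w' c v + dist w' v t := by
            gcongr; exact dist_le_add_dist s c v
        _ ≤ w' s c + pWeight w' (c :: r) := by
            rw [add_assoc]; gcongr; exact ih hcr hlt'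

variable [Finite V]

lemma dist_add_dist_eq_of_dist_lt (hpos' : ∀ a b, 0 < w' a b)
    (hinto : ∀ a b, w' a b < w a b → b = v) (h : dist w' s t < dist w s t) :
    dist w' s v + dist w' v t = dist w' s t := by
  obtain ⟨p, hp, hpd⟩ := exists_isShortest hpos' h.ne_top
  refine le_antisymm ?_ (dist_triangle s v t)
  exact (dist_add_dist_le_pWeight hinto hp
    (hpd.trans_lt (h.trans_le (dist_le_pWeight_of_isPath hp)))).trans_eq hpd

lemma weight_add_dist_eq_of_lt_weight_add_dist (hpos' : ∀ a b, 0 < w' a b)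
    (hinto : ∀ a b, w' a b < w a b → b = v) {a b : V}
    (h : w' b a + dist w' a s = dist w' b s) (hs : dist w' b s ≠ ⊤)
    (hlt : dist w' b s < w b a + dist w a s) : w' b a + dist w' a v = dist w' b v := by
  have has : dist w' a s ≠ ⊤ := (ENNReal.add_ne_top.1 (h ▸ hs)).2
  rcases lt_or_lt_of_add_lt_add (h.trans_lt hlt) with hba | has'
  · obtain rfl := hinto b a hba
    rw [dist_self, add_zero]
    exact weight_eq_dist_of_add_dist_eq h has
  · have hvia := dist_add_dist_eq_of_dist_lt hpos' hinto has'
    have hvs : dist w' v s ≠ ⊤ := (ENNReal.add_ne_top.1 (hvia ▸ has)).2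
    refine le_antisymm ((ENNReal.add_le_add_iff_right hvs).1 ?_) (dist_le_add_dist b a v)
    calc w' b a + dist w' a v + dist w' v s = dist w' b s := by rw [add_assoc, hvia, h]
      _ ≤ dist w' b v + dist w' v s := dist_triangle b v s

lemma exists_isShortest_lt_of_lt_weight_add_dist (hpos' : ∀ a b, 0 < w' a b) {a b : V}
    (h : w' b a + dist w' a s = dist w' b s) (hs : dist w' b s ≠ ⊤)
    (hlt : dist w' b s < w b a + dist w a s) :
    ∃ p, IsShortest w' b s p ∧ pWeight w' p < pWeight w p := by
  obtain ⟨hba, has⟩ := ENNReal.add_ne_top.1 (h ▸ hs)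
  obtain ⟨p, hp, hpd⟩ := exists_isShortest hpos' has
  obtain ⟨q, rfl⟩ := hp.exists_eq_cons
  have hw' : pWeight w' (b :: a :: q) = dist w' b s := by rw [pWeight_cons_cons, hpd, h]
  refine ⟨b :: a :: q, ⟨isPath_cons_cons.2 ⟨rfl, hba, hp⟩, hw'⟩, ?_⟩
  calc pWeight w' (b :: a :: q) = dist w' b s := hw'
    _ < w b a + dist w a s := hlt
    _ ≤ pWeight w (b :: a :: q) := by
        rw [pWeight_cons_cons]; gcongr; exact dist_le_pWeight_of_isPath hp

lemma unChanged_or_numChanged_iff (hpos' : ∀ a b, 0 < w' a b) (hle : ∀ a b, w' a b ≤ w a b) :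
    UNchanged w w' s t ∨ NUMchanged w w' s t ↔ dist w' s t = dist w s t := by
  refine ⟨fun h => h.elim And.left And.left, fun hd => ?_⟩
  rcases (Set.ncard_le_ncard (fun p hp => hp.of_dist_eq hle hd)
    (finite_setOf_isShortest hpos' s t) : nsp w s t ≤ nsp w' s t).eq_or_lt with h | h
  · exact Or.inl ⟨hd, h.symm⟩
  · exact Or.inr ⟨hd, h⟩

lemma numChanged_or_wtChanged_iff (hpos' : ∀ a b, 0 < w' a b) (hle : ∀ a b, w' a b ≤ w a b) :
    NUMchanged w w' s t ∨ WTchanged w w' s t ↔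
      ∃ p, IsShortest w' s t p ∧ pWeight w' p < pWeight w p := by
  constructor
  · rintro (⟨hd, hlt⟩ | hlt)
    · by_contra! H
      have hsub : {p | IsShortest w' s t p} ⊆ {p | IsShortest w s t p} := fun p hp =>
        have hw : pWeight w p = pWeight w' p := le_antisymm (H p hp) (pWeight_mono hle p)
        ⟨isPath_of_pWeight_ne_top hp.1 (hw ▸ pWeight_ne_top hp.1), hw.trans (hp.2.trans hd)⟩
      exact hlt.ne (congrArg Set.ncard (hsub.antisymm fun p hp => hp.of_dist_eq hle hd)).symm
    · obtain ⟨p, hp⟩ := exists_isShortest hpos' hlt.ne_top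
      exact ⟨p, hp, hp.2.trans_lt (hlt.trans_le (dist_le_pWeight_of_isPath hp.1))⟩
  · rintro ⟨p, hp, hlt⟩
    rcases (dist_mono hle s t).lt_or_eq with hd | hd
    · exact Or.inr hd
    refine Or.inl ⟨hd, Set.ncard_lt_ncard ⟨fun q hq => hq.of_dist_eq hle hd, fun hsub => ?_⟩
      (finite_setOf_isShortest hpos' s t)⟩
    exact hlt.ne (hp.2.trans (hd.trans (hsub hp).2.symm))

end Update

theorem update_reverse_dag_correct_general [Fintype V]
(w w' : V → V → ℝ≥0∞) (v : V) (U : Finset V)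
    (hpos' : ∀ a b, 0 < w' a b)
    (hdec : ∀ u ∈ U, w' u v < w u v)
    (hsame : ∀ a b : V, ¬(b = v ∧ a ∈ U) → w' a b = w a b)
    (s a b : V) :
    (a, b) ∈ dagSet (fun x y => w' y x) s ↔
      ((a, b) ∈ dagSet (fun x y => w y x) s ∧
        (UNchanged w w' b s ∨ NUMchanged w w' b s)) ∨
      (((b, a) ∈ dagSet w' b ∧ w' b a + dist w' a v = dist w' b v) ∧
        (NUMchanged w w' b s ∨ WTchanged w w' b s)) := by
  have hle : ∀ x y, w' x y ≤ w x y := fun x y => by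
    by_cases h : y = v ∧ x ∈ U
    · exact h.1 ▸ (hdec x h.2).le
    · exact (hsame x y h).le
  have hinto : ∀ x y, w' x y < w x y → y = v := fun x y hlt =>
    (not_not.1 fun h => hlt.ne (hsame x y h)).1
  rw [mem_dagSet_flip_iff, mem_dagSet_flip_iff, mem_dagSet_self_iff,
    unChanged_or_numChanged_iff hpos' hle, numChanged_or_wtChanged_iff hpos' hle]
  constructor
  · rintro ⟨hbs, hs⟩
    obtain ⟨hba, has⟩ := ENNReal.add_ne_top.1 (hbs ▸ hs)
    rcases weight_add_dist_eq_and_dist_eq_or_lt hle a b with ⟨hold, hd⟩ | hlt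
    · exact Or.inl ⟨⟨hold, hd ▸ hs⟩, hd⟩
    · exact Or.inr ⟨⟨⟨hba, weight_eq_dist_of_add_dist_eq hbs has⟩,
        weight_add_dist_eq_of_lt_weight_add_dist hpos' hinto hbs hs hlt⟩,
        exists_isShortest_lt_of_lt_weight_add_dist hpos' hbs hs hlt⟩
  · rintro (⟨⟨hbs, hs⟩, hd⟩ | ⟨⟨-, hbv⟩, p, hp, hlt⟩)
    · exact ⟨weight_add_dist_eq_of_dist_eq hle hbs hd, hd ▸ hs⟩
    · exact ⟨weight_add_dist_eq_of_add_dist_eq hbv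
        ((dist_add_dist_le_pWeight hinto hp.1 hlt).trans_eq hp.2), hp.2 ▸ pWeight_ne_top hp.1⟩

/-- Lemma 5: after an incremental update on the edges `E_i(v)` incoming
to `v`, for any source `s` and edge `(a,b)`: `(a,b) ∈ DAG'_R(s)` (the shortest-path DAG
rooted at `s` in the reverse graph of `G'`) iff
(i) `(a,b) ∈ DAG_R(s)` and flag(b,s) ∈ {UN-changed, NUM-changed}; or
(ii) `(a,b) ∈ R_b` (i.e. `(b,a) ∈ DAG'(b)` and `w'(b,a) + d'(a,v) = d'(b,v)`)
and flag(b,s) ∈ {NUM-changed, WT-changed}. -/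
theorem update_reverse_dag_correct [Fintype V]
(w w' : V → V → ℝ≥0∞) (v : V) (U : Finset V)
    (hpos : ∀ a b, 0 < w a b) (hpos' : ∀ a b, 0 < w' a b)
    (hdec : ∀ u ∈ U, w' u v < w u v)
    (hsame : ∀ a b : V, ¬(b = v ∧ a ∈ U) → w' a b = w a b)
    (s a b : V) :
    (a, b) ∈ dagSet (fun x y => w' y x) s ↔
      ((a, b) ∈ dagSet (fun x y => w y x) s ∧
        (UNchanged w w' b s ∨ NUMchanged w w' b s)) ∨
      (((b, a) ∈ dagSet w' b ∧ w' b a + dist w' a v = dist w' b v) ∧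
        (NUMchanged w w' b s ∨ WTchanged w w' b s)) :=
  update_reverse_dag_correct_general w w' v U hpos' hdec hsame s a b

end BC
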